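/- arXiv:0904.3953 — 2 statements merged into one kernel-verified Lean document; each statement's English description precedes it below -/
import Mathlib

section
/- Let P be a normal propositional logic program and let M be a set of atoms. Then M is a stable model of P if and only if M satisfies the defining equations E_P, that is, if and only if for every atom p: p ∈ M if and only if there exists a support S of p with respect to P such that M ∩ S = ∅. -/
/-- A normal logic program clause `head ← posBody, not negBody`. -/
structure Clause (At : Type) where
  head : At
  posBody : Finset At
  negBody : Finset At

/-- `GLop P M p` : `p` belongs to the least model of the Gelfond–Lifschitz reduct `P^M`. -/
inductive GLop {At : Type} (P : Set (Clause At)) (M : Set At) : At → Prop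
  | step (C : Clause At) (hC : C ∈ P) (hneg : ∀ r ∈ C.negBody, r ∉ M)
      (hpos : ∀ q ∈ C.posBody, GLop P M q) : GLop P M C.head

/-- `M` is a stable model of `P`. -/
def IsStable {At : Type} (P : Set (Clause At)) (M : Set At) : Prop :=
  {p | GLop P M p} = M

/-- A guarded Horn clause `head ← body : guard`; a guarded atom is the case `body = ∅`. -/
structure GClause (At : Type) where
  head : At
  body : Finset At
  guard : Finset At

/-- The guarded representation of a program clause. -/
def gC {At : Type} (C : Clause At) : GClause At :=
  ⟨C.head, C.posBody, C.negBody⟩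

/-- Finite labelled binary trees with `GClause` labels. -/
inductive GTree (At : Type) : Type
  | leaf (L : GClause At) : GTree At
  | node (t₁ t₂ : GTree At) (L : GClause At) : GTree At

/-- The label of the root of a tree. -/
def GTree.label {At : Type} : GTree At → GClause At
  | .leaf L => L
  | .node _ _ L => L

/-- The set of all labels occurring in a tree. -/
def GTree.labels {At : Type} : GTree At → Set (GClause At)
  | .leaf L => {L}
  | .node t₁ t₂ L => insert L (t₁.labels ∪ t₂.labels)

/-- `IsGRProof P t` : `t` is a guarded resolution proof from `g(P)`.  Leaves are labelled by
guarded clauses `g(C)` for `C ∈ P` (in particular, guarded atoms when `posBody C = ∅`),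
and each inner node is obtained by guarded unit resolution from a guarded Horn clause
parent and a guarded atom parent. -/
inductive IsGRProof {At : Type} [DecidableEq At] (P : Set (Clause At)) : GTree At → Prop
  | leaf (L : GClause At) (C : Clause At) (hC : C ∈ P) (hL : L = gC C) :
      IsGRProof P (GTree.leaf L)
  | node (t₁ t₂ : GTree At) (h₁ : IsGRProof P t₁) (h₂ : IsGRProof P t₂)
      (q : At) (hq : q ∈ t₁.label.body) (ha : t₂.label.body = ∅)
      (hhead : t₂.label.head = q) :
      IsGRProof P (GTree.node t₁ t₂
        ⟨t₁.label.head, t₁.label.body.erase q, t₁.label.guard ∪ t₂.label.guard⟩)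

/-- The guarded atom `p : S` has a guarded resolution proof from `g(P)`,
i.e. `S` is a support of `p` with respect to `P`. -/
def HasGRProof {At : Type} [DecidableEq At] (P : Set (Clause At)) (p : At) (S : Finset At) : Prop :=
  ∃ t : GTree At, IsGRProof P t ∧ t.label = ⟨p, ∅, S⟩

/-- `M` admits the guarded atom `p : S` (only the guard matters): `M ∩ S = ∅`. -/
def Admits {At : Type} (M : Set At) (S : Finset At) : Prop :=
  ∀ r ∈ S, r ∉ M

/-- `M` satisfies the body of the clause `C`. -/
def SatBody {At : Type} (M : Set At) (C : Clause At) : Prop :=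
  (∀ q ∈ C.posBody, q ∈ M) ∧ (∀ r ∈ C.negBody, r ∉ M)

/-- `M` is a model of `P`. -/
def IsModel {At : Type} (P : Set (Clause At)) (M : Set At) : Prop :=
  ∀ C ∈ P, SatBody M C → C.head ∈ M

/-- `M` is a supported model of `P`. -/
def IsSupported {At : Type} (P : Set (Clause At)) (M : Set At) : Prop :=
  IsModel P M ∧ ∀ p ∈ M, ∃ C ∈ P, C.head = p ∧ SatBody M C

lemma grproof_sound {At : Type} [DecidableEq At] {P : Set (Clause At)} {M : Set At}
    {t : GTree At} (ht : IsGRProof P t) :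
    Admits M t.label.guard → (∀ q ∈ t.label.body, GLop P M q) → GLop P M t.label.head := by
  induction ht with
  | leaf L C hC hL =>
    intro hg hb
    subst hL
    simp only [GTree.label, gC] at hg hb ⊢
    exact GLop.step C hC hg hb
  | node t₁ t₂ h₁ h₂ q hq ha hhead ih₁ ih₂ =>
    intro hg hb
    simp only [GTree.label] at hg hb ⊢
    have hg₁ : Admits M t₁.label.guard := fun r hr => hg r (Finset.mem_union_left _ hr)
    have hg₂ : Admits M t₂.label.guard := fun r hr => hg r (Finset.mem_union_right _ hr)
    have hq' : GLop P M q := hhead ▸ ih₂ hg₂ (by simp [ha])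
    refine ih₁ hg₁ (fun r hr => ?_)
    by_cases h : r = q
    · exact h ▸ hq'
    · exact hb r (Finset.mem_erase.mpr ⟨h, hr⟩)

lemma grproof_combine {At : Type} [DecidableEq At] (P : Set (Clause At)) (M : Set At) :
    ∀ (n : ℕ) (t : GTree At), t.label.body.card = n → IsGRProof P t →
    Admits M t.label.guard →
    (∀ q ∈ t.label.body, ∃ S, HasGRProof P q S ∧ Admits M S) →
    ∃ S, HasGRProof P t.label.head S ∧ Admits M S := by
  intro n
  induction n with
  | zero =>
    intro t hcard ht hg _
    refine ⟨t.label.guard, ⟨t, ht, ?_⟩, hg⟩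
    have hb : t.label.body = ∅ := Finset.card_eq_zero.mp hcard
    cases hL : t.label with
    | mk h b g => rw [hL] at hb; simp_all
  | succ n ih =>
    intro t hcard ht hg hb
    obtain ⟨q, hq⟩ : t.label.body.Nonempty := Finset.card_pos.mp (by omega)
    obtain ⟨Sq, ⟨t₂, ht₂, hl₂⟩, hSq⟩ := hb q hq
    have ht' : IsGRProof P (GTree.node t t₂
        ⟨t.label.head, t.label.body.erase q, t.label.guard ∪ t₂.label.guard⟩) :=
      IsGRProof.node t t₂ ht ht₂ q hq (by rw [hl₂]) (by rw [hl₂])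
    have := ih (GTree.node t t₂
        ⟨t.label.head, t.label.body.erase q, t.label.guard ∪ t₂.label.guard⟩)
      (show (t.label.body.erase q).card = n by
        rw [Finset.card_erase_of_mem hq, hcard]; omega) ht' ?_ ?_
    · exact this
    · show Admits M (t.label.guard ∪ t₂.label.guard)
      intro r hr
      rcases Finset.mem_union.mp hr with h | h
      · exact hg r h
      · exact hSq r (by rwa [hl₂] at h)
    · show ∀ q' ∈ t.label.body.erase q, _
      intro r hr
      exact hb r (Finset.mem_of_mem_erase hr)

lemma glop_iff_support {At : Type} [DecidableEq At] (P : Set (Clause At)) (M : Set At)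
    (p : At) : GLop P M p ↔ ∃ S, HasGRProof P p S ∧ Admits M S := by
  constructor
  · intro h
    induction h with
    | step C hC hneg hpos ih =>
      have hleaf : IsGRProof P (GTree.leaf (gC C)) := IsGRProof.leaf _ C hC rfl
      have := grproof_combine P M (gC C).body.card (GTree.leaf (gC C)) rfl hleaf
        (by simpa [GTree.label, gC, Admits] using hneg)
        (by simpa [GTree.label, gC] using ih)
      simpa [GTree.label, gC] using this
  · rintro ⟨S, ⟨t, ht, hl⟩, hS⟩
    have := grproof_sound ht (by rw [hl]; exact hS) (by rw [hl]; simp)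
    rwa [hl] at this

theorem stable_iff_satisfies_defining_equations {At : Type} [DecidableEq At]
    (P : Set (Clause At)) (M : Set At) :
    IsStable P M ↔
      ∀ p : At, (p ∈ M ↔ ∃ S : Finset At, HasGRProof P p S ∧ ∀ r ∈ S, r ∉ M) := by
  unfold IsStable
  rw [Set.ext_iff]
  constructor
  · intro h p
    rw [show (p ∈ M) ↔ GLop P M p from (h p).symm, glop_iff_support]
    rfl
  · intro h p
    rw [Set.mem_setOf_eq, glop_iff_support, h p]
    rfl
end

section
/- Let P be a normal propositional logic program. For every stable model M of P there exists a candidate theory T for P such that M is a propositional model of T. -/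
/-- A candidate theory for `P` is encoded by a choice `se` of one subequation per atom:
`se p = none` represents the subequation `¬ p`, and `se p = some S` represents the
subequation `p ⇔ ⋀_{q ∈ S} ¬ q`, where `S` must be a support of `p` with respect to `P`. -/
def IsCandidateTheory {At : Type} [DecidableEq At] (P : Set (Clause At))
    (se : At → Option (Finset At)) : Prop :=
  ∀ p S, se p = some S → HasGRProof P p S

/-- `M` is a propositional model of the candidate theory: `M` satisfies every clause of `P`
(read as a propositional formula) and every chosen subequation. -/
def SatCandidate {At : Type} (P : Set (Clause At))
    (se : At → Option (Finset At)) (M : Set At) : Prop :=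
  IsModel P M ∧
    ∀ p, (se p = none → p ∉ M) ∧
      ∀ S, se p = some S → (p ∈ M ↔ ∀ r ∈ S, r ∉ M)


lemma build_support {At : Type} [DecidableEq At] (P : Set (Clause At)) (M : Set At) :
    ∀ B : Finset At, ∀ t : GTree At, IsGRProof P t → t.label.body = B →
      (∀ q ∈ B, ∃ S, HasGRProof P q S ∧ Admits M S) →
      Admits M t.label.guard →
      ∃ S, HasGRProof P t.label.head S ∧ Admits M S := by
  intro B
  induction B using Finset.strongInduction with
  | _ B IH =>
    intro t ht hbody hqs hguard
    rcases B.eq_empty_or_nonempty with rfl | ⟨q, hq⟩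
    · refine ⟨t.label.guard, ⟨t, ht, ?_⟩, hguard⟩
      cases h : t.label with
      | mk hh bb gg =>
        have : bb = ∅ := by rw [h] at hbody; exact hbody
        simp [this]
    · obtain ⟨S, ⟨t₂, ht₂, hlab₂⟩, hadm⟩ := hqs q hq
      have hqb : q ∈ t.label.body := hbody ▸ hq
      have ht' : IsGRProof P (GTree.node t t₂
          ⟨t.label.head, t.label.body.erase q, t.label.guard ∪ t₂.label.guard⟩) :=
        IsGRProof.node t t₂ ht ht₂ q hqb (by rw [hlab₂]) (by rw [hlab₂])
      have := IH (B.erase q) (Finset.erase_ssubset hq) _ ht'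
        (show t.label.body.erase q = B.erase q by rw [hbody])
        (fun r hr => hqs r (Finset.mem_of_mem_erase hr))
        (by
          intro r hr
          have hr' : r ∈ t.label.guard ∪ t₂.label.guard := hr
          rcases Finset.mem_union.mp hr' with hr'' | hr''
          · exact hguard r hr''
          · rw [hlab₂] at hr''; exact hadm r hr'')
      exact this

lemma glop_support {At : Type} [DecidableEq At] (P : Set (Clause At)) (M : Set At)
    (p : At) (h : GLop P M p) : ∃ S, HasGRProof P p S ∧ Admits M S := by
  induction h with
  | step C hC hneg hpos ih =>
    have hleaf : IsGRProof P (GTree.leaf (gC C)) := IsGRProof.leaf _ C hC rfl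
    have := build_support P M C.posBody (GTree.leaf (gC C)) hleaf rfl ih
      (by intro r hr; exact hneg r hr)
    simpa [GTree.label, gC] using this

theorem stable_has_candidate_theory {At : Type} [DecidableEq At]
    (P : Set (Clause At)) (M : Set At) (hM : IsStable P M) :
    ∃ se : At → Option (Finset At), IsCandidateTheory P se ∧ SatCandidate P se M := by
  classical
  have hmem : ∀ p, p ∈ M → GLop P M p := by
    intro p hp; rw [← hM] at hp; exact hp
  have hIsModel : IsModel P M := by
    intro C hC hsat
    have : GLop P M C.head :=
      GLop.step C hC hsat.2 (fun q hq => hmem q (hsat.1 q hq))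
    rw [← hM]; exact this
  refine ⟨fun p => if hp : p ∈ M then some (glop_support P M p (hmem p hp)).choose
    else none, ?_, hIsModel, ?_⟩
  · intro p S hS
    by_cases hp : p ∈ M
    · simp only [hp, dif_pos] at hS
      have := (glop_support P M p (hmem p hp)).choose_spec
      rw [Option.some_inj] at hS
      exact hS ▸ this.1
    · simp [hp] at hS
  · intro p
    constructor
    · intro h
      by_cases hp : p ∈ M
      · simp [hp] at h
      · exact hp
    · intro S hS
      by_cases hp : p ∈ M
      · simp only [hp, dif_pos, Option.some_inj] at hS
        have := (glop_support P M p (hmem p hp)).choose_spec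
        constructor
        · intro _ r hr; exact this.2 r (hS ▸ hr)
        · intro _; exact hp
      · simp [hp] at hS
end
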